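/- Assume p_A + p_B = 1 and 1/2 < p_A < 1. For γ ∈ (0,1], let M_γ denote the transition matrix built with switching probability γ, let μ₁ be the probability vector on S with μ₁(σ,0) = 1/2 for σ ∈ {+1,−1} and 0 elsewhere, let μ_n^{(γ)} = (M_γ)^{n−1} μ₁, and let CDR_n^{(γ)} = Σ_{i=−N}^{ℓ} μ_n^{(γ)}(+1,i) + Σ_{i=−N}^{−ℓ−1} μ_n^{(γ)}(−1,i). Then for any two values γ, γ' ∈ (0,1], the limits lim_{n→∞} CDR_n^{(γ)} and lim_{n→∞} CDR_n^{(γ')} both exist and are equal; that is, the limiting correct decision rate is independent of the autocorrelation coefficient λ = 1 − 2γ of the driving signal. -/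

import Mathlib

open Matrix Finset Filter Topology

/-- Threshold index set `{-N, ..., N}`. -/
abbrev Idx (N : ℕ) : Type := {i : ℤ // i ∈ Finset.Icc (-(N : ℤ)) (N : ℤ)}

/-- State space `{+1, -1} × {-N, ..., N}`; `true` encodes `+1`, `false` encodes `-1`. -/
abbrev St (N : ℕ) : Type := Bool × Idx N

/-- The upward-move probability `q(σ, i)`. -/
noncomputable def qfun (pA pB : ℝ) (ℓ : ℤ) (σ : Bool) (i : ℤ) : ℝ :=
  if σ then (if i ≤ ℓ then 1 - pA else pB) else (if i ≤ -ℓ - 1 then 1 - pA else pB)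

/-- The 2×2 signal-flip matrix `Γ` with diagonal `1 - γ` and off-diagonal `γ`. -/
noncomputable def Gam (γ : ℝ) (τ σ : Bool) : ℝ := if τ = σ then 1 - γ else γ

/-- The transition matrix `M` of the coupled chain `(s_n, θ_n)`:
`M_{(τ,j),(σ,i)} = Γ_{τ,σ} q(σ,i)` if `j = min(i+1, N)`,
`Γ_{τ,σ} (1 - q(σ,i))` if `j = max(i-1, -N)`, `0` otherwise
(coinciding contributions are added). -/
noncomputable def Mmat (N : ℕ) (pA pB γ : ℝ) (ℓ : ℤ) : Matrix (St N) (St N) ℝ :=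
  fun tj si =>
    Gam γ tj.1 si.1 *
      ((if (tj.2 : ℤ) = min ((si.2 : ℤ) + 1) (N : ℤ) then qfun pA pB ℓ si.1 si.2 else 0) +
       (if (tj.2 : ℤ) = max ((si.2 : ℤ) - 1) (-(N : ℤ)) then 1 - qfun pA pB ℓ si.1 si.2 else 0))


/-- Initial distribution: threshold at the origin, signal value uniformly random. -/
noncomputable def mu1 (N : ℕ) : St N → ℝ := fun si => if (si.2 : ℤ) = 0 then 1 / 2 else 0

/-- The correct decision rate at the `n`-th decision, `CDR_n = P(arm A is selected)`,
for the chain started from `mu1` and driven with switching probability `γ`. -/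
noncomputable def cdrSeq (N : ℕ) (pA pB γ : ℝ) (ℓ : ℤ) (n : ℕ) : ℝ :=
  (∑ i : Idx N, if (i : ℤ) ≤ ℓ then
      ((Mmat N pA pB γ ℓ) ^ (n - 1)).mulVec (mu1 N) (true, i) else 0) +
  (∑ i : Idx N, if (i : ℤ) ≤ -ℓ - 1 then
      ((Mmat N pA pB γ ℓ) ^ (n - 1)).mulVec (mu1 N) (false, i) else 0)

/-!
When `p_A + p_B = 1` the threshold steps up with probability `p_B` whatever the signal, so the
transition matrix is `Γ ⊗ W` for the random walk `W` on `{-N, ..., N}` that is sticky at both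
ends. Since `Γ` has unit row sums and `μ₁` does not depend on the signal, `μ_n(σ, ·)` equals
`W^{n-1}` applied to the threshold part of `μ₁`, for both `σ` and every `γ`; hence `CDR_n` does
not depend on `γ` at all. The walk `W` is primitive (it reaches `N`, loops there, and walks
down to any state), so Dobrushin's contraction of the `ℓ¹` norm on sum-zero vectors makes
`W^n v` converge geometrically fast.
-/

open scoped Kronecker

namespace Matrix

theorem mul_apply_pos_of_pos {l m n : Type*} [Fintype m] {A : Matrix l m ℝ} {B : Matrix m n ℝ}
    (hA : ∀ i j, 0 ≤ A i j) (hB : ∀ i j, 0 ≤ B i j) {i : l} {k : n} (j : m)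
    (hij : 0 < A i j) (hjk : 0 < B j k) : 0 < (A * B) i k :=
  sum_pos' (fun j _ => mul_nonneg (hA i j) (hB j k)) ⟨j, mem_univ j, mul_pos hij hjk⟩

section ColStochastic

variable {ι : Type*} [Fintype ι] [DecidableEq ι] {A : Matrix ι ι ℝ}

theorem sum_abs_mulVec_le (hA : A ∈ colStochastic ℝ ι) (w : ι → ℝ) :
    ∑ j, |(A *ᵥ w) j| ≤ ∑ i, |w i| :=
  calc ∑ j, |(A *ᵥ w) j| ≤ ∑ j, ∑ i, A j i * |w i| := by
        gcongr with j
        refine (abs_sum_le_sum_abs _ _).trans_eq (sum_congr rfl fun i _ => ?_)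
        rw [abs_mul, abs_of_nonneg (hA.1 j i)]
    _ = ∑ i, |w i| := by
        rw [sum_comm]
        simp only [← sum_mul, sum_col_of_mem_colStochastic hA, one_mul]

/-- Dobrushin's contraction: for `∑ w = 0` one may subtract `δ` from every entry of `A`, which
leaves a nonnegative matrix with column sums `1 - card ι * δ`. -/
theorem sum_abs_mulVec_le_of_sum_eq_zero (hA : A ∈ colStochastic ℝ ι) {δ : ℝ}
    (hδ : ∀ j i, δ ≤ A j i) {w : ι → ℝ} (hw : ∑ i, w i = 0) :
    ∑ j, |(A *ᵥ w) j| ≤ (1 - Fintype.card ι * δ) * ∑ i, |w i| := by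
  have hshift : ∀ j, (A *ᵥ w) j = ∑ i, (A j i - δ) * w i := fun j => by
    simp only [sub_mul, sum_sub_distrib, ← mul_sum, hw, mul_zero, sub_zero]
    rfl
  calc ∑ j, |(A *ᵥ w) j| ≤ ∑ j, ∑ i, (A j i - δ) * |w i| := by
        gcongr with j
        rw [hshift]
        refine (abs_sum_le_sum_abs _ _).trans_eq (sum_congr rfl fun i _ => ?_)
        rw [abs_mul, abs_of_nonneg (sub_nonneg.2 (hδ j i))]
    _ = (1 - Fintype.card ι * δ) * ∑ i, |w i| := by
        rw [sum_comm, mul_sum]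
        refine sum_congr rfl fun i _ => ?_
        rw [← sum_mul, sum_sub_distrib, sum_col_of_mem_colStochastic hA, sum_const, card_univ,
          nsmul_eq_mul]

theorem card_mul_le_one_of_le_apply [Nonempty ι] (hA : A ∈ colStochastic ℝ ι) {δ : ℝ}
    (hδ : ∀ j i, δ ≤ A j i) : Fintype.card ι * δ ≤ 1 := by
  obtain ⟨i⟩ := ‹Nonempty ι›
  calc Fintype.card ι * δ = ∑ _j : ι, δ := by rw [sum_const, card_univ, nsmul_eq_mul]
    _ ≤ ∑ j, A j i := sum_le_sum fun j _ => hδ j i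
    _ = 1 := sum_col_of_mem_colStochastic hA i

theorem sum_abs_pow_mulVec_le_of_sum_eq_zero [Nonempty ι] (hA : A ∈ colStochastic ℝ ι) {δ : ℝ}
    (hδ : ∀ j i, δ ≤ A j i) {w : ι → ℝ} (hw : ∑ i, w i = 0) (s : ℕ) :
    ∑ j, |(A ^ s *ᵥ w) j| ≤ (1 - Fintype.card ι * δ) ^ s * ∑ i, |w i| := by
  induction s with
  | zero => simp
  | succ s ih =>
    have hsum : ∑ i, (A ^ s *ᵥ w) i = 0 := by
      rw [sum_mulVec_of_mem_colStochastic (pow_mem hA s), hw]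
    calc ∑ j, |(A ^ (s + 1) *ᵥ w) j|
        ≤ (1 - Fintype.card ι * δ) * ∑ i, |(A ^ s *ᵥ w) i| := by
          rw [pow_succ', ← mulVec_mulVec]
          exact sum_abs_mulVec_le_of_sum_eq_zero hA hδ hsum
      _ ≤ (1 - Fintype.card ι * δ) * ((1 - Fintype.card ι * δ) ^ s * ∑ i, |w i|) := by
          gcongr
          linarith [card_mul_le_one_of_le_apply hA hδ]
      _ = (1 - Fintype.card ι * δ) ^ (s + 1) * ∑ i, |w i| := by ring

theorem IsPrimitive.exists_sum_abs_pow_mulVec_le [Nonempty ι] (hA : A ∈ colStochastic ℝ ι)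
    (hP : A.IsPrimitive) :
    ∃ k > 0, ∃ c : ℝ, 0 ≤ c ∧ c < 1 ∧ ∀ w : ι → ℝ, ∑ i, w i = 0 → ∀ n,
      ∑ j, |(A ^ n *ᵥ w) j| ≤ c ^ (n / k) * ∑ i, |w i| := by
  obtain ⟨k, hk, hpos⟩ := hP.exists_pos_pow
  obtain ⟨p, -, hp⟩ := exists_min_image univ (fun p : ι × ι => (A ^ k) p.1 p.2) univ_nonempty
  have hδ : ∀ j i, (A ^ k) p.1 p.2 ≤ (A ^ k) j i := fun j i => hp (j, i) (mem_univ _)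
  have hAk := pow_mem hA k
  refine ⟨k, hk, 1 - Fintype.card ι * (A ^ k) p.1 p.2,
    by linarith [card_mul_le_one_of_le_apply hAk hδ],
    by have := mul_pos (Nat.cast_pos.2 (Fintype.card_pos (α := ι))) (hpos p.1 p.2); linarith,
    fun w hw n => ?_⟩
  calc ∑ j, |(A ^ n *ᵥ w) j| = ∑ j, |(A ^ (n % k) *ᵥ ((A ^ k) ^ (n / k) *ᵥ w)) j| := by
        rw [mulVec_mulVec, ← pow_mul, ← pow_add, Nat.mod_add_div]
    _ ≤ ∑ j, |((A ^ k) ^ (n / k) *ᵥ w) j| := sum_abs_mulVec_le (pow_mem hA _) _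
    _ ≤ _ := sum_abs_pow_mulVec_le_of_sum_eq_zero hAk hδ hw _

theorem IsPrimitive.exists_tendsto_pow_mulVec [Nonempty ι] (hA : A ∈ colStochastic ℝ ι)
    (hP : A.IsPrimitive) (v : ι → ℝ) : ∃ π, Tendsto (fun n => A ^ n *ᵥ v) atTop (𝓝 π) := by
  obtain ⟨k, hk, c, hc0, hc1, hdecay⟩ := hP.exists_sum_abs_pow_mulVec_le hA
  refine cauchySeq_tendsto_of_complete <|
    cauchySeq_of_le_tendsto_0' (fun n => c ^ (n / k) * (2 * ∑ i, |v i|)) (fun n m hnm => ?_) ?_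
  · obtain ⟨d, rfl⟩ := Nat.exists_eq_add_of_le hnm
    have hsum : ∑ i, (v - A ^ d *ᵥ v) i = 0 := by
      rw [Pi.sub_def, sum_sub_distrib, sum_mulVec_of_mem_colStochastic (pow_mem hA d), sub_self]
    have hnorm : ∑ i, |(v - A ^ d *ᵥ v) i| ≤ 2 * ∑ i, |v i| :=
      calc ∑ i, |(v - A ^ d *ᵥ v) i| ≤ ∑ i, |v i| + ∑ i, |(A ^ d *ᵥ v) i| := by
            rw [← sum_add_distrib]; exact sum_le_sum fun i _ => abs_sub _ _
        _ ≤ 2 * ∑ i, |v i| := by linarith [sum_abs_mulVec_le (pow_mem hA d) v]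
    refine (dist_pi_le_iff (by positivity)).2 fun j => ?_
    calc dist ((A ^ n *ᵥ v) j) ((A ^ (n + d) *ᵥ v) j) = |(A ^ n *ᵥ (v - A ^ d *ᵥ v)) j| := by
          rw [Real.dist_eq, mulVec_sub, mulVec_mulVec, ← pow_add]; rfl
      _ ≤ ∑ j, |(A ^ n *ᵥ (v - A ^ d *ᵥ v)) j| :=
          single_le_sum (f := fun j => |(A ^ n *ᵥ (v - A ^ d *ᵥ v)) j|)
            (fun _ _ => abs_nonneg _) (mem_univ j)
      _ ≤ c ^ (n / k) * (2 * ∑ i, |v i|) :=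
          (hdecay _ hsum n).trans (by gcongr)
  · simpa using ((tendsto_pow_atTop_nhds_zero_of_lt_one hc0 hc1).comp
      (Nat.tendsto_div_const_atTop hk.ne')).mul_const (2 * ∑ i, |v i|)

end ColStochastic

section Kronecker

variable {R α β : Type*} [CommSemiring R] [Fintype α] [Fintype β]

theorem kronecker_mulVec_comp_snd {G : Matrix α α R} (hG : ∀ a, ∑ b, G a b = 1)
    (W : Matrix β β R) (u : β → R) : (G ⊗ₖ W) *ᵥ (u ∘ Prod.snd) = (W *ᵥ u) ∘ Prod.snd := by
  funext ⟨a, j⟩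
  simp only [mulVec, dotProduct, kronecker_apply, Function.comp_apply, Fintype.sum_prod_type,
    mul_assoc, ← mul_sum, ← sum_mul, hG, one_mul]

theorem kronecker_pow_mulVec_comp_snd [DecidableEq α] [DecidableEq β] {G : Matrix α α R}
    (hG : ∀ a, ∑ b, G a b = 1) (W : Matrix β β R) (u : β → R) (n : ℕ) :
    (G ⊗ₖ W) ^ n *ᵥ (u ∘ Prod.snd) = (W ^ n *ᵥ u) ∘ Prod.snd := by
  induction n with
  | zero => simp
  | succ n ih => rw [pow_succ', ← mulVec_mulVec, ih, kronecker_mulVec_comp_snd hG,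
      mulVec_mulVec, ← pow_succ']

end Kronecker

end Matrix

noncomputable def stickyWalk (N : ℕ) (p : ℝ) : Matrix (Idx N) (Idx N) ℝ :=
  fun j i =>
    (if (j : ℤ) = min ((i : ℤ) + 1) (N : ℤ) then p else 0) +
    (if (j : ℤ) = max ((i : ℤ) - 1) (-(N : ℤ)) then 1 - p else 0)

namespace Idx

variable {N : ℕ}

lemma neg_le (i : Idx N) : -(N : ℤ) ≤ i := (mem_Icc.1 i.2).1

lemma le_top (i : Idx N) : (i : ℤ) ≤ N := (mem_Icc.1 i.2).2

def top (N : ℕ) : Idx N := ⟨N, by simp⟩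

instance : Nonempty (Idx N) := ⟨top N⟩

def succ (i : Idx N) : Idx N :=
  ⟨min ((i : ℤ) + 1) N, by have := i.neg_le; simp only [mem_Icc]; omega⟩

lemma sum_ite_coe_eq {m : ℤ} (hm : m ∈ Icc (-(N : ℤ)) N) (a : ℝ) :
    ∑ j : Idx N, (if (j : ℤ) = m then a else 0) = a := by
  rw [Fintype.sum_eq_single ⟨m, hm⟩ fun j hj => if_neg fun h => hj (Subtype.ext h), if_pos rfl]

end Idx

namespace stickyWalk

variable {N : ℕ} {p : ℝ}

lemma nonneg (hp0 : 0 ≤ p) (hp1 : p ≤ 1) (j i : Idx N) : 0 ≤ stickyWalk N p j i := by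
  have : 0 ≤ 1 - p := by linarith
  unfold stickyWalk
  positivity

lemma mem_colStochastic (hp0 : 0 ≤ p) (hp1 : p ≤ 1) :
    stickyWalk N p ∈ colStochastic ℝ (Idx N) := by
  refine mem_colStochastic_iff_sum.2 ⟨nonneg hp0 hp1, fun i => ?_⟩
  have := i.neg_le
  have := i.le_top
  simp only [stickyWalk, sum_add_distrib]
  rw [Idx.sum_ite_coe_eq (by simp [mem_Icc]; omega), Idx.sum_ite_coe_eq (by simp [mem_Icc]; omega)]
  ring

lemma apply_succ_self_pos (hp0 : 0 < p) (hp1 : p ≤ 1) (i : Idx N) :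
    0 < stickyWalk N p i.succ i := by
  have : 0 ≤ 1 - p := by linarith
  simp only [stickyWalk, Idx.succ, if_true]
  positivity

lemma apply_self_succ_pos (hp0 : 0 < p) (hp1 : p < 1) (j : Idx N) :
    0 < stickyWalk N p j j.succ := by
  rcases j.le_top.lt_or_eq with hj | hj
  · have hsucc : ((j.succ : Idx N) : ℤ) = j + 1 := min_eq_left hj
    have hne : (j : ℤ) ≠ min ((j : ℤ) + 1 + 1) N := by omega
    have heq : (j : ℤ) = max ((j : ℤ) + 1 - 1) (-(N : ℤ)) := by have := j.neg_le; omega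
    simp only [stickyWalk, hsucc, if_neg hne, if_pos heq, zero_add]
    linarith
  · have hsucc : ((j.succ : Idx N) : ℤ) = j := by simp [Idx.succ, hj]
    rw [stickyWalk, hsucc, if_pos (by omega)]
    exact add_pos_of_pos_of_nonneg hp0 (by split_ifs <;> linarith)

lemma pow_top_apply_pos (hp0 : 0 < p) (hp1 : p ≤ 1) (t : ℕ) (i : Idx N) (hi : (N : ℤ) ≤ i + t) :
    0 < (stickyWalk N p ^ t) (Idx.top N) i := by
  induction t generalizing i with
  | zero =>
    obtain rfl : i = Idx.top N := Subtype.ext (by have := i.le_top; simp [Idx.top]; omega)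
    simp
  | succ t ih =>
    rw [pow_succ]
    refine mul_apply_pos_of_pos (pow_apply_nonneg (nonneg hp0.le hp1) t) (nonneg hp0.le hp1)
      i.succ (ih _ ?_) (apply_succ_self_pos hp0 hp1 i)
    simp only [Idx.succ]
    omega

lemma pow_apply_top_pos (hp0 : 0 < p) (hp1 : p < 1) (t : ℕ) (j : Idx N) (hj : (N : ℤ) ≤ j + t) :
    0 < (stickyWalk N p ^ t) j (Idx.top N) := by
  induction t generalizing j with
  | zero =>
    obtain rfl : j = Idx.top N := Subtype.ext (by have := j.le_top; simp [Idx.top]; omega)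
    simp
  | succ t ih =>
    rw [pow_succ']
    refine mul_apply_pos_of_pos (nonneg hp0.le hp1.le) (pow_apply_nonneg (nonneg hp0.le hp1.le) t)
      j.succ (apply_self_succ_pos hp0 hp1 j) (ih _ ?_)
    simp only [Idx.succ]
    omega

/-- Every state reaches the top `N` in `2N + 1` steps, and the top reaches every state in
`2N + 1` steps, the surplus being spent in the self-loop at `N`. -/
lemma isPrimitive (hp0 : 0 < p) (hp1 : p < 1) : (stickyWalk N p).IsPrimitive := by
  have hW := nonneg (N := N) hp0.le hp1.le
  refine ⟨hW, (2 * N + 1) + (2 * N + 1), by omega, fun j i => ?_⟩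
  rw [pow_add]
  exact mul_apply_pos_of_pos (pow_apply_nonneg hW _) (pow_apply_nonneg hW _) (Idx.top N)
    (pow_apply_top_pos hp0 hp1 _ j (by have := j.neg_le; push_cast; omega))
    (pow_top_apply_pos hp0 hp1.le _ i (by have := i.neg_le; push_cast; omega))

end stickyWalk

lemma sum_Gam (γ : ℝ) (τ : Bool) : ∑ σ, Gam γ τ σ = 1 := by
  cases τ <;> simp [Gam]

/-- For `p_A + p_B = 1` the threshold moves up with probability `p_B` whatever the signal. -/
lemma Mmat_eq_kronecker {N : ℕ} {pA pB γ : ℝ} {ℓ : ℤ} (hsum : pA + pB = 1) :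
    Mmat N pA pB γ ℓ = Matrix.of (Gam γ) ⊗ₖ stickyWalk N pB := by
  have hq : ∀ σ i, qfun pA pB ℓ σ i = pB := fun σ i => by
    unfold qfun; split_ifs <;> linarith
  ext ⟨τ, j⟩ ⟨σ, i⟩
  simp [Mmat, stickyWalk, hq]

noncomputable def mu1Fiber (N : ℕ) : Idx N → ℝ := fun i => if (i : ℤ) = 0 then 1 / 2 else 0

/-- The correct decision rate when both signal values carry the threshold distribution `v`. -/
noncomputable def cdrOf {N : ℕ} (ℓ : ℤ) (v : Idx N → ℝ) : ℝ :=
  (∑ i : Idx N, if (i : ℤ) ≤ ℓ then v i else 0) + ∑ i : Idx N, if (i : ℤ) ≤ -ℓ - 1 then v i else 0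

lemma continuous_cdrOf (N : ℕ) (ℓ : ℤ) : Continuous (cdrOf (N := N) ℓ) :=
  .add (continuous_finsetSum _ fun i _ => by split_ifs <;> fun_prop)
    (continuous_finsetSum _ fun i _ => by split_ifs <;> fun_prop)

lemma cdrSeq_eq {N : ℕ} {pA pB γ : ℝ} {ℓ : ℤ} (hsum : pA + pB = 1) :
    cdrSeq N pA pB γ ℓ = fun n => cdrOf ℓ (stickyWalk N pB ^ (n - 1) *ᵥ mu1Fiber N) := by
  funext n
  rw [cdrSeq, Mmat_eq_kronecker hsum, show mu1 N = mu1Fiber N ∘ Prod.snd from rfl,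
    Matrix.kronecker_pow_mulVec_comp_snd (G := Matrix.of (Gam γ)) (sum_Gam γ)]
  rfl

lemma exists_tendsto_cdrSeq {N : ℕ} {pA pB : ℝ} (hsum : pA + pB = 1) (hpB0 : 0 < pB)
    (hpB1 : pB < 1) (ℓ : ℤ) : ∃ L, ∀ γ, Tendsto (cdrSeq N pA pB γ ℓ) atTop (𝓝 L) := by
  obtain ⟨π, hπ⟩ := (stickyWalk.isPrimitive hpB0 hpB1).exists_tendsto_pow_mulVec
    (stickyWalk.mem_colStochastic hpB0.le hpB1.le) (mu1Fiber N)
  refine ⟨cdrOf ℓ π, fun γ => ?_⟩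
  rw [cdrSeq_eq hsum]
  exact ((continuous_cdrOf N ℓ).tendsto π).comp (hπ.comp (tendsto_sub_atTop_nat 1))

theorem cdr_limit_independent_of_gamma_general
    (N : ℕ) (x : ℝ)
    (pA pB : ℝ) (hpB0 : 0 < pB) (hpB1 : pB < 1)
    (hsum : pA + pB = 1)
    (γ γ' : ℝ) :
    ∃ L : ℝ,
      Filter.Tendsto (cdrSeq N pA pB γ ⌊x⌋) Filter.atTop (𝓝 L) ∧
      Filter.Tendsto (cdrSeq N pA pB γ' ⌊x⌋) Filter.atTop (𝓝 L) := by
  obtain ⟨L, hL⟩ := exists_tendsto_cdrSeq hsum hpB0 hpB1 ⌊x⌋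
  exact ⟨L, hL γ, hL γ'⟩

/-- Theorem: when `p_A + p_B = 1`, for any two switching probabilities `γ, γ' ∈ (0,1]`
the limiting correct decision rates exist and coincide; i.e. the limiting performance is
independent of the autocorrelation coefficient `λ = 1 - 2γ` of the driving signal. -/
theorem cdr_limit_independent_of_gamma
    (N : ℕ) (hN : 0 < N) (x : ℝ) (hx0 : 0 < x) (hxN : x < N)
    (hxint : ∀ k : ℤ, (k : ℝ) ≠ x)
    (pA pB : ℝ) (hpAhalf : 1 / 2 < pA) (hpA1 : pA < 1) (hpB0 : 0 < pB) (hpB1 : pB < 1)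
    (hsum : pA + pB = 1)
    (γ γ' : ℝ) (hγ0 : 0 < γ) (hγ1 : γ ≤ 1) (hγ'0 : 0 < γ') (hγ'1 : γ' ≤ 1) :
    ∃ L : ℝ,
      Filter.Tendsto (cdrSeq N pA pB γ ⌊x⌋) Filter.atTop (𝓝 L) ∧
      Filter.Tendsto (cdrSeq N pA pB γ' ⌊x⌋) Filter.atTop (𝓝 L) :=
  cdr_limit_independent_of_gamma_general N x pA pB hpB0 hpB1 hsum γ γ'
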